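/- For any Dynkin quiver Q of simply-laced type, the Coxeter transforms of Q and of its dual quiver Q* satisfy w₀ τ_Q w₀ = τ_{Q*}^{−1} in the Weyl group. -/

import Mathlib

open scoped BigOperators

namespace CLDual

noncomputable section

open scoped Classical

/-- The ambient field `ℂ(𝔱*)` of rational functions in the simple roots `α₁, …, αₙ`. -/
abbrev K (n : ℕ) := FractionRing (MvPolynomial (Fin n) ℂ)

/-- A root-lattice element (written in the basis of simple roots) viewed as a linear
form on the Cartan subalgebra, i.e. as an element of `K n`. -/
def lin {n : ℕ} (γ : Fin n → ℤ) : K n :=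
  algebraMap (MvPolynomial (Fin n) ℂ) (K n)
    (∑ i, (γ i : MvPolynomial (Fin n) ℂ) * MvPolynomial.X i)

/-- The twisted realization `ψ ∘ lin`, where `ψ(α_i) = α_{i*}`. -/
def linStar {n : ℕ} (st : Fin n → Fin n) (γ : Fin n → ℤ) : K n :=
  lin fun i => γ (st i)

/-- The scalars `ℂ` inside `K n`. -/
def cK {n : ℕ} (c : ℂ) : K n :=
  algebraMap (MvPolynomial (Fin n) ℂ) (K n) (MvPolynomial.C c)

/-- The scalars `ℂ` inside `K n`, as a ring homomorphism. -/
def cKHom (n : ℕ) : ℂ →+* K n :=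
  (algebraMap (MvPolynomial (Fin n) ℂ) (K n)).comp (MvPolynomial.C)

/-- The (simply-laced) Cartan matrix attached to the underlying graph of a quiver,
the quiver being recorded by its arrow-count function `arr`. -/
def cartan {n : ℕ} (arr : Fin n → Fin n → ℕ) (i j : Fin n) : ℤ :=
  if i = j then 2 else -((arr i j : ℤ) + (arr j i : ℤ))

/-- Simple reflection `s_i` acting on the root lattice `Fin n → ℤ`. -/
def sref {n : ℕ} (A : Fin n → Fin n → ℤ) (i : Fin n) (v : Fin n → ℤ) : Fin n → ℤ :=
  v - (∑ j, A i j * v j) • Pi.single i 1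

/-- Action of a word in the simple reflections (the word `[i₁, …, i_N]` acts as
`s_{i₁} ∘ ⋯ ∘ s_{i_N}`). -/
def wact {n : ℕ} (A : Fin n → Fin n → ℤ) : List (Fin n) → (Fin n → ℤ) → (Fin n → ℤ)
  | [] => fun v => v
  | i :: t => fun v => sref A i (wact A t v)

/-- `i` is a source of the quiver. -/
def isSource {n : ℕ} (arr : Fin n → Fin n → ℕ) (i : Fin n) : Prop := ∀ j, arr j i = 0

/-- The quiver obtained by reversing all arrows incident to `i`. -/
def reflQ {n : ℕ} (arr : Fin n → Fin n → ℕ) (i : Fin n) : Fin n → Fin n → ℕ :=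
  fun a b => if a = i ∨ b = i then arr b a else arr a b

/-- A word is adapted to a quiver: each letter is a source of the quiver obtained by
reflecting at the previous letters. -/
def AdaptedTo {n : ℕ} (arr : Fin n → Fin n → ℕ) : List (Fin n) → Prop
  | [] => True
  | i :: t => isSource arr i ∧ AdaptedTo (reflQ arr i) t

/-- A word is reduced (no shorter word represents the same Weyl group element). -/
def IsReduced {n : ℕ} (A : Fin n → Fin n → ℤ) (l : List (Fin n)) : Prop :=
  ∀ l' : List (Fin n), wact A l' = wact A l → l.length ≤ l'.length

/-- Existence of an oriented path in the quiver. -/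
def Reach {n : ℕ} (arr : Fin n → Fin n → ℕ) : Fin n → Fin n → Prop :=
  Relation.ReflTransGen fun a b => arr a b ≠ 0

/-- The Euler form `⟨·,·⟩_Q` of the quiver `Q` with arrow counts `arr`. -/
def eulerForm {n : ℕ} (arr : Fin n → Fin n → ℕ) (u v : Fin n → ℤ) : ℤ :=
  ∑ i, ∑ j, u i * ((if i = j then 1 else 0) - (arr i j : ℤ)) * v j

/-- The symmetrized invariant bilinear form `(·,·)` on the root lattice. -/
def bform {n : ℕ} (arr : Fin n → Fin n → ℕ) (u v : Fin n → ℤ) : ℤ :=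
  ∑ i, ∑ j, u i * cartan arr i j * v j

/-- The dual quiver `Q*`: `#{k → l in Q*} = #{l* → k* in Q}`. -/
def dualArr {n : ℕ} (st : Fin n → Fin n) (arr : Fin n → Fin n → ℕ) :
    Fin n → Fin n → ℕ :=
  fun k l => arr (st l) (st k)

/-- The exponent lattice of Laurent monomials in the variables `Y_{i,p}`. -/
abbrev Mon (n : ℕ) := (Fin n × ℤ) →₀ ℤ

/-- The Laurent polynomial ring `ℂ ⊗ 𝒴_ℤ` in the variables `Y_{i,p}`. -/
abbrev Yring (n : ℕ) := AddMonoidAlgebra ℂ (Mon n)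

/-- The exponent vector of the variable `Y_{i,p}`. -/
def Ymon {n : ℕ} (i : Fin n) (p : ℤ) : Mon n := Finsupp.single (i, p) 1

/-- The exponent vector of `A_{i,s} = Y_{i,s-1} Y_{i,s+1} ∏_{j ∼ i} Y_{j,s}^{-1}`. -/
def Amon {n : ℕ} (arr : Fin n → Fin n → ℕ) (i : Fin n) (s : ℤ) : Mon n :=
  Finsupp.single (i, s - 1) 1 + Finsupp.single (i, s + 1) 1
    - ∑ k, ((arr i k : ℤ) + (arr k i : ℤ)) • Finsupp.single (k, s) 1

/-- The exponent vector of the dominant monomial `Y_{i,p} Y_{i,p+2} ⋯ Y_{i,p+2k-2}`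
of the Kirillov-Reshetikhin module `X_{i,p}^{(k)}`. -/
def YmonKR {n : ℕ} (i : Fin n) (p : ℤ) (k : ℕ) : Mon n :=
  ∑ t ∈ Finset.range k, Finsupp.single (i, p + 2 * (t : ℤ)) 1

/-- All the combinatorial data attached to a simply-laced Dynkin quiver `Q` with a
height function `ξ` adapted to `Q`: the Auslander-Reiten roots `β_{j,s}`, the longest
element `w₀` and the involution `*`, the Coxeter transform `τ_Q` (with Coxeter number
`h`), and the coefficients `C̃_{i,j}(m)` of the inverse quantum Cartan matrix, each
characterized by its defining property. -/
structure Setup (n h : ℕ) : Type where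
  /-- arrow counts of the quiver `Q` -/
  arr : Fin n → Fin n → ℕ
  /-- no multiple edges (simply-laced diagram) -/
  hsl : ∀ i j, arr i j + arr j i ≤ 1
  /-- no loops -/
  hloop : ∀ i, arr i i = 0
  /-- the height function -/
  xi : Fin n → ℤ
  /-- the height function is adapted to `Q` -/
  hxi : ∀ i j, arr i j ≠ 0 → xi j = xi i - 1
  /-- an enumeration of the vertices adapted to `Q` (defining the Coxeter transform) -/
  ord : List (Fin n)
  hord_nodup : ord.Nodup
  hord_mem : ∀ i, i ∈ ord
  hord_adapted : AdaptedTo arr ord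
  /-- a word representing the longest element `w₀` -/
  lw0 : List (Fin n)
  /-- the involution `*` of the Dynkin diagram -/
  star : Fin n → Fin n
  hstar : ∀ i, star (star i) = i
  /-- `w₀ (α_i) = - α_{i*}`, which characterizes the longest element -/
  hw0 : ∀ i, wact (cartan arr) lw0 (Pi.single i 1) = - Pi.single (star i) 1
  /-- `h` is the order of the Coxeter transform, i.e. the Coxeter number -/
  hcox : (wact (cartan arr) ord)^[h] = id
  hcox_min : ∀ m, 0 < m → m < h → (wact (cartan arr) ord)^[m] ≠ id
  /-- the Auslander-Reiten roots `β_{j,s}` -/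
  beta : Fin n → ℤ → Fin n → ℤ
  /-- `β_{j,ξ(j)} = dim I_j = ∑_{k ⇝ j} α_k` -/
  hbeta_inj : ∀ j k, beta j (xi j) k = if Reach arr k j then 1 else 0
  /-- `β_{j,p-2} = τ_Q (β_{j,p})` -/
  hbeta_tau : ∀ j p, beta j (p - 2) = wact (cartan arr) ord (beta j p)
  /-- the coefficients `C̃_{i,j}(m)` of the entries of the inverse quantum Cartan matrix -/
  Ct : Fin n → Fin n → ℤ → ℤ
  /-- `C̃_{i,j}(m) = 0` for `m ≤ 0` -/
  hCt_zero : ∀ i j m, m ≤ 0 → Ct i j m = 0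
  /-- the defining recurrence `C(z) C̃(z) = Id`, coefficientwise -/
  hCt_rec : ∀ i j m, Ct i j (m - 1) + Ct i j (m + 1)
      - ∑ k, ((arr i k : ℤ) + (arr k i : ℤ)) * Ct k j m = if i = j ∧ m = 0 then 1 else 0

namespace Setup

variable {n h : ℕ} (S : Setup n h)

/-- The Coxeter transform `τ_Q`. -/
def tau : (Fin n → ℤ) → (Fin n → ℤ) := wact (cartan S.arr) S.ord

/-- The longest element `w₀`. -/
def w0 : (Fin n → ℤ) → (Fin n → ℤ) := wact (cartan S.arr) S.lw0

/-- `(i,p) ∈ Î_ℤ`, i.e. `p ∈ i + 2ℤ` (parity normalized by the height function). -/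
def Ipar (x : Fin n × ℤ) : Prop := (x.2 - S.xi x.1) % 2 = 0

/-- `D̃_ξ (Y_{i,p})` for `p ≤ ξ(i)`:
`∏_{j ∈ I, s ∈ ξ(j) - 2ℤ≥0} β_{j,s}^{C̃_{i,j}(s-p-1) - C̃_{i,j}(s-p+1)}`
(all factors with `s < p` have exponent `0`, so the product is finite), computed with
an arbitrary realization `lv` of root-lattice elements as elements of `K n`. -/
def Dy (lv : (Fin n → ℤ) → K n) (i : Fin n) (p : ℤ) : K n :=
  ∏ j : Fin n, ∏ t ∈ Finset.range ((S.xi j - p).toNat + 1),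
    lv (S.beta j (S.xi j - 2 * (t : ℤ))) ^
      (S.Ct i j (S.xi j - 2 * (t : ℤ) - p - 1) - S.Ct i j (S.xi j - 2 * (t : ℤ) - p + 1))

/-- `D̃_ξ (Y_{i,p})` extended to all `p` by the `2h`-periodicity
`D̃_ξ(Y_{i,p}) = D̃_ξ(Y_{i,p-2mh})` (`m ≥ 0`, `p - 2mh ≤ ξ(i)`). -/
def DyE (lv : (Fin n → ℤ) → K n) (i : Fin n) (p : ℤ) : K n :=
  S.Dy lv i (p - 2 * (h : ℤ) * max (p - S.xi i) 0)

/-- `D̃_ξ` on a Laurent monomial in the `Y_{i,p}`. -/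
def Dmon (lv : (Fin n → ℤ) → K n) (m : Mon n) : K n :=
  ∏ x ∈ m.support, S.DyE lv x.1 x.2 ^ m x

/-- `D̃_ξ` as a map on the Laurent polynomial ring `ℂ ⊗ 𝒴_ℤ`. -/
def DT (lv : (Fin n → ℤ) → K n) (f : Yring n) : K n :=
  Finsupp.sum f.coeff fun m c => cK c * S.Dmon lv m

/-- Truncation of an element of `𝒴_ℤ` with respect to the height function `ξ`:
drop all monomials involving a variable `Y_{i,p}` with `p > ξ(i)`. -/
def trunc (f : Yring n) : Yring n :=
  AddMonoidAlgebra.ofCoeff (Finsupp.filter (fun m : Mon n => ∀ x ∈ m.support, x.2 ≤ S.xi x.1) f.coeff)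

end Setup

/-- The Grothendieck ring `K₀(𝒞_ℤ)`, realized as the polynomial ring on the classes
of the fundamental modules `L(Y_{i,p})`. -/
abbrev K0 (n : ℕ) := MvPolynomial (Fin n × ℤ) ℂ

/-- Evaluation of a class in `K₀(𝒞_ℤ)` obtained by assigning a value in `K n` to each
fundamental class (multiplicative extension). -/
def fundEvalK {n : ℕ} (vals : Fin n × ℤ → K n) : K0 n →+* K n :=
  MvPolynomial.eval₂Hom (cKHom n) vals

/-- The `q`-character homomorphism `χ_q : K₀(𝒞_ℤ) → 𝒴_ℤ`, determined by the
`q`-characters of the fundamental modules. -/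
def fundEvalY {n : ℕ} (chi : Fin n × ℤ → Yring n) : K0 n →+* Yring n :=
  MvPolynomial.eval₂Hom (AddMonoidAlgebra.singleZeroRingHom) chi

/-- The map `D̄` (for `lv = lin`) resp. `D̄* = ψ ∘ D̃_{ξ*} ∘ χ̃*_q`
(for `lv = linStar star`): on a fundamental class `[L(Y_{i,p})]` it is
`D̃_ξ(χ̃_q(L(Y_{i,p})))` if `p ≤ ξ(i)` and `0` otherwise, extended multiplicatively
to `K₀(𝒞_ℤ)`. -/
def DBarCl {n h : ℕ} (S : Setup n h) (lv : (Fin n → ℤ) → K n)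
    (chiF : Fin n → ℤ → Yring n) : K0 n →+* K n :=
  fundEvalK fun x => if x.2 ≤ S.xi x.1 then S.DT lv (S.trunc (chiF x.1 x.2)) else 0

/-- The data of the `q`-characters and Grothendieck classes of the
Kirillov-Reshetikhin modules `X_{i,p}^{(k)}` of `𝒞_ℤ`, with their defining
properties (dominant monomial, T-systems). The parameter `a` records the arrow
counts of (any orientation of) the Dynkin diagram. -/
structure RepData (n : ℕ) (a : Fin n → Fin n → ℕ) : Type where
  /-- the `q`-character of `X_{i,p}^{(k)}` -/
  chiKR : Fin n → ℤ → ℕ → Yring n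
  /-- the class of `X_{i,p}^{(k)}` in `K₀(𝒞_ℤ)` -/
  krK : Fin n → ℤ → ℕ → K0 n
  hchi0 : ∀ i p, chiKR i p 0 = 1
  hkr0 : ∀ i p, krK i p 0 = 1
  /-- `X_{i,p}^{(1)} = L(Y_{i,p})` is fundamental -/
  hkr1 : ∀ i p, krK i p 1 = MvPolynomial.X (i, p)
  /-- compatibility: `χ_q` of the class is the `q`-character -/
  hcompat : ∀ i p k, fundEvalY (fun x => chiKR x.1 x.2 1) (krK i p k) = chiKR i p k
  /-- the renormalized `q`-character is a polynomial in the `A_{j,s}^{-1}` with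
  constant term `1` -/
  hhighest : ∀ i p k, 1 ≤ k → ∃ P : Yring n,
      chiKR i p k = AddMonoidAlgebra.single (YmonKR i p k) 1 * P ∧
      Finsupp.instFunLike.coe P.coeff 0 = 1 ∧
      ∀ m ∈ Finsupp.support P.coeff, m ∈ AddSubmonoid.closure {x : Mon n | ∃ j s, x = - Amon a j s}
  /-- the T-system relations -/
  hT : ∀ i p k, 1 ≤ k → chiKR i p k * chiKR i (p + 2) k
      = chiKR i p (k + 1) * chiKR i (p + 2) (k - 1)
        + ∏ j, chiKR j (p + 1) k ^ (a i j + a j i)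

/-- The shift functor on (the index set of) indecomposable objects of the derived
category: `M_{j,s}[m] = M_{j^{*(m)}, s + mh}`. -/
def shiftOb {n h : ℕ} (S : Setup n h) (m : ℤ) (y : Fin n × ℤ) : Fin n × ℤ :=
  (if m % 2 = 0 then y.1 else S.star y.1, y.2 + m * (h : ℤ))

/-- Data of the dimensions of `Hom` spaces between indecomposable objects of the
bounded derived category `D^b(Rep Q)`; the indecomposables are indexed by `Î_ℤ`
through `(i,p) ↦ M_{i,p}` (with `M_{j,ξ(j)} = I_j`), and the defining properties
(directedness, Serre duality, relation with the Euler form) are recorded. -/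
structure HomData {n h : ℕ} (S : Setup n h) : Type where
  /-- `homDim x y = dim Hom(M_x, M_y)` -/
  homDim : (Fin n × ℤ) → (Fin n × ℤ) → ℕ
  hfin : ∀ x, {y : Fin n × ℤ | S.Ipar y ∧ homDim x y ≠ 0}.Finite
  hfuture : ∀ x y, homDim x y ≠ 0 → x.2 ≤ y.2
  /-- Serre duality: `Hom(X, Y) ≅ Hom(S⁻¹Y, X)*` with `S⁻¹ M_{j,s} = M_{j*, s-h+2}` -/
  hserre : ∀ x y : Fin n × ℤ, homDim x y = homDim (S.star y.1, y.2 - (h : ℤ) + 2) x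
  /-- directedness: nonvanishing in at most one shift -/
  hdirected : ∀ x y m m', homDim x (shiftOb S m y) ≠ 0 → homDim x (shiftOb S m' y) ≠ 0 → m = m'
  /-- `⟨β_x, β_y⟩_Q = ∑_m (-1)^m dim Hom(M_x, M_y[m])` -/
  heuler_zero : ∀ x y, S.Ipar x → S.Ipar y → (∀ m : ℤ, homDim x (shiftOb S m y) = 0) →
      eulerForm S.arr (S.beta x.1 x.2) (S.beta y.1 y.2) = 0
  heuler_ne : ∀ x y, S.Ipar x → S.Ipar y → ∀ m : ℤ, homDim x (shiftOb S m y) ≠ 0 →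
      eulerForm S.arr (S.beta x.1 x.2) (S.beta y.1 y.2)
        = (Int.negOnePow m : ℤ) * homDim x (shiftOb S m y)

/-- `d_i := #{N indecomposable in D^b(Rep Q) : Hom(I_i, N) ≠ 0}`. -/
def HomData.d {n h : ℕ} {S : Setup n h} (HD : HomData S) (i : Fin n) : ℕ :=
  {y : Fin n × ℤ | S.Ipar y ∧ HD.homDim (i, S.xi i) y ≠ 0}.ncard

/-- `d` extended to all integer labels (vertices are labelled `1, …, n`), with the
convention `d_m := 1` for `m ≤ 0` or `m > n`. -/
def HomData.dext {n h : ℕ} {S : Setup n h} (HD : HomData S) (m : ℤ) : ℤ :=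
  if hm : 1 ≤ m ∧ m ≤ (n : ℤ) then (HD.d ⟨(m - 1).toNat, by omega⟩ : ℤ) else 1

/-- The two classical types considered. -/
inductive CType | A | D
deriving DecidableEq

/-- Adjacency (edge count) of the Dynkin diagram of type `A_n` resp. `D_n`, the
vertices being labelled `1, …, n` (vertex `i : Fin n` has label `i.val + 1`;
in type `D_n` the spin nodes are `n-1` and `n`, both joined to `n-2`). -/
def adjC (ct : CType) (n : ℕ) (i j : Fin n) : ℕ :=
  match ct with
  | .A => if i.val + 1 = j.val ∨ j.val + 1 = i.val then 1 else 0
  | .D => if (i.val + 1 = j.val ∧ j.val + 2 ≤ n) ∨ (j.val + 1 = i.val ∧ i.val + 2 ≤ n)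
        ∨ (i.val + 3 = n ∧ j.val + 1 = n) ∨ (j.val + 3 = n ∧ i.val + 1 = n) then 1 else 0

/-- The monotonic orientation `Q₀` (each edge oriented towards the larger label). -/
def arrMono (ct : CType) (n : ℕ) (i j : Fin n) : ℕ :=
  if i.val < j.val then adjC ct n i j else 0

/-- `i` is a spin node (type `D_n`, label `n-1` or `n`). -/
def IsSpin (ct : CType) (n : ℕ) (i : Fin n) : Prop :=
  ct = CType.D ∧ (i.val + 2 = n ∨ i.val + 1 = n)

/-- The diagram automorphism `σ` of `D_n` exchanging the two spin nodes. -/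
def sigmaD {n : ℕ} (i : Fin n) : Fin n :=
  if h2 : i.val + 2 = n then ⟨n - 1, by omega⟩
  else if h1 : i.val + 1 = n then ⟨n - 2, by omega⟩
  else i

/-- `σ` (the identity in type `A`). -/
def sigmaC (ct : CType) {n : ℕ} : Fin n → Fin n :=
  match ct with
  | .A => id
  | .D => sigmaD

/-- `σ^m` for an integer `m` (`σ` is an involution). -/
def sigmaPowZ (ct : CType) {n : ℕ} (m : ℤ) (i : Fin n) : Fin n :=
  if m % 2 = 0 then i else sigmaC ct i

/-- `γ_i := dim I*_i`, the dimension vector of the indecomposable injective of `Q*`. -/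
def gammaV {n h : ℕ} (T : Setup n h) (i : Fin n) : Fin n → ℤ :=
  fun k => if Reach T.arr k i then 1 else 0

/-- `β_i^{(j)} := τ^{j-1}(γ_i)`. -/
def betaUp {n h : ℕ} (T : Setup n h) (i : Fin n) (j : ℕ) : Fin n → ℤ :=
  T.tau^[j - 1] (gammaV T i)

/-- The root-lattice elements `γ_{i,j}` (for `j ≥ 1`; `γ_{i,j} := 0` for `j = 0`). -/
def gammaIJ (ct : CType) {n h : ℕ} (T : Setup n h) (hn : 0 < n) (i : Fin n) (j : ℕ) :
    Fin n → ℤ :=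
  if j = 0 then 0
  else if IsSpin ct n i ∧ j % h = (n - 1) % h then
    betaUp T (sigmaPowZ ct ((n : ℤ) - (j : ℤ)) i) (n - 1)
  else ∑ l ∈ Finset.Icc 1 j, betaUp T (⟨0, hn⟩ : Fin n) l

/-- `γ_{i,j}` indexed by the label `m = i.val + 1` of the vertex. -/
def gammaN (ct : CType) {n h : ℕ} (T : Setup n h) (hn : 0 < n) (m j : ℕ) : Fin n → ℤ :=
  gammaIJ ct T hn (if hm : m - 1 < n then ⟨m - 1, hm⟩ else ⟨0, hn⟩) j

/-- `R_i^{(k)} := (-1)^i ∏_{j=k-i}^{k-1} γ_{i,j}` (indexed by the label `m` of `i`);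
in particular `R_i^{(k)} = 0` for `k ≤ i`. -/
def Rnat (ct : CType) {n h : ℕ} (T : Setup n h) (hn : 0 < n) (m k : ℕ) : K n :=
  (-1 : K n) ^ m * ∏ j ∈ Finset.Icc (k - m) (k - 1), lin (gammaN ct T hn m j)

/-- `P_i^{(k)} := D̄*(X_{i, ξ*(i) - 2k + 2}^{(k)})`. -/
def Pval {n hc : ℕ} (T : Setup n hc) {a : Fin n → Fin n → ℕ} (rd : RepData n a)
    (i : Fin n) (k : ℕ) : K n :=
  DBarCl T (linStar T.star) (fun j q => rd.chiKR j q 1)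
    (rd.krK i (T.xi i - 2 * (k : ℤ) + 2) k)

/-- `P` indexed by labels, with `P_m^{(k)} := 1` for `m = 0` or `m > n`. -/
def Plab {n hc : ℕ} (T : Setup n hc) {a : Fin n → Fin n → ℕ} (rd : RepData n a)
    (m k : ℕ) : K n :=
  if hm : 1 ≤ m ∧ m ≤ n then Pval T rd ⟨m - 1, by omega⟩ k else 1



section CoxeterDualityAux

variable {n : ℕ}

lemma sum_mul_single (g : Fin n → ℤ) (j : Fin n) :
    ∑ k, g k * (Pi.single j 1 : Fin n → ℤ) k = g j := by
  simp [Pi.single_apply, mul_ite, Finset.sum_ite_eq']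

lemma sref_def (A : Fin n → Fin n → ℤ) (i : Fin n) (v : Fin n → ℤ) :
    sref A i v = v - (∑ j, A i j * v j) • Pi.single i 1 := rfl

lemma sref_apply (A : Fin n → Fin n → ℤ) (i : Fin n) (v : Fin n → ℤ) (k : Fin n) :
    sref A i v k = v k - (∑ j, A i j * v j) * (if k = i then 1 else 0) := by
  simp [sref, Pi.single_apply]

lemma sref_sum (A : Fin n → Fin n → ℤ) (i j : Fin n) (v : Fin n → ℤ) :
    ∑ k, A i k * sref A j v k
      = (∑ k, A i k * v k) - (∑ k, A j k * v k) * A i j := by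
  have h : ∀ k, A i k * sref A j v k
      = A i k * v k - (∑ m, A j m * v m) * (A i k * (Pi.single j 1 : Fin n → ℤ) k) := by
    intro k
    rw [sref_apply]
    by_cases hk : k = j <;> simp [hk, Pi.single_apply] <;> try ring
  rw [Finset.sum_congr rfl fun k _ => h k, Finset.sum_sub_distrib, ← Finset.mul_sum,
    sum_mul_single (fun k => A i k) j]

lemma sref_comm (A : Fin n → Fin n → ℤ) {i j : Fin n}
    (hij : A i j = 0) (hji : A j i = 0) (v : Fin n → ℤ) :
    sref A i (sref A j v) = sref A j (sref A i v) := by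
  rw [sref_def A i (sref A j v), sref_def A j (sref A i v), sref_sum, sref_sum,
    hij, hji, mul_zero, mul_zero, sub_zero, sub_zero, sref_def A j v, sref_def A i v]
  abel

lemma sref_invol (A : Fin n → Fin n → ℤ) {i : Fin n} (h2 : A i i = 2)
    (v : Fin n → ℤ) : sref A i (sref A i v) = v := by
  rw [sref_def A i (sref A i v), sref_sum, h2]
  have he : (∑ k, A i k * v k) - (∑ k, A i k * v k) * 2 = -(∑ k, A i k * v k) := by ring
  rw [he, neg_smul, sref_def A i v]
  abel

lemma sref_add (A : Fin n → Fin n → ℤ) (i : Fin n) (u v : Fin n → ℤ) :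
    sref A i (u + v) = sref A i u + sref A i v := by
  simp only [sref_def, Pi.add_apply, mul_add, Finset.sum_add_distrib, add_smul]
  abel

lemma sref_smul (A : Fin n → Fin n → ℤ) (i : Fin n) (c : ℤ) (v : Fin n → ℤ) :
    sref A i (c • v) = c • sref A i v := by
  have h : (∑ k, A i k * (c • v) k) = c * ∑ k, A i k * v k := by
    rw [Finset.mul_sum]
    exact Finset.sum_congr rfl fun k _ => by simp [smul_eq_mul]; ring
  rw [sref_def, sref_def, h, mul_smul, smul_sub]

lemma wact_nil (A : Fin n → Fin n → ℤ) (v : Fin n → ℤ) : wact A [] v = v := rfl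

lemma wact_cons (A : Fin n → Fin n → ℤ) (i : Fin n) (t : List (Fin n)) (v : Fin n → ℤ) :
    wact A (i :: t) v = sref A i (wact A t v) := rfl

lemma wact_add (A : Fin n → Fin n → ℤ) :
    ∀ (l : List (Fin n)) (u v : Fin n → ℤ), wact A l (u + v) = wact A l u + wact A l v
  | [], u, v => rfl
  | i :: t, u, v => by rw [wact_cons, wact_cons, wact_cons, wact_add A t, sref_add]

lemma wact_smul (A : Fin n → Fin n → ℤ) :
    ∀ (l : List (Fin n)) (c : ℤ) (v : Fin n → ℤ), wact A l (c • v) = c • wact A l v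
  | [], c, v => rfl
  | i :: t, c, v => by rw [wact_cons, wact_cons, wact_smul A t, sref_smul]

lemma wact_zero (A : Fin n → Fin n → ℤ) (l : List (Fin n)) :
    wact A l (0 : Fin n → ℤ) = 0 := by
  have := wact_smul A l 0 0
  simpa using this

lemma wact_sum {ι : Type*} (A : Fin n → Fin n → ℤ) (l : List (Fin n)) (s : Finset ι)
    (f : ι → Fin n → ℤ) : wact A l (∑ x ∈ s, f x) = ∑ x ∈ s, wact A l (f x) := by
  classical
  induction s using Finset.induction_on with
  | empty => simpa using wact_zero A l
  | insert _ _ hx ih => rw [Finset.sum_insert hx, Finset.sum_insert hx, wact_add, ih]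

lemma wact_append (A : Fin n → Fin n → ℤ) :
    ∀ (l₁ l₂ : List (Fin n)) (v : Fin n → ℤ),
      wact A (l₁ ++ l₂) v = wact A l₁ (wact A l₂ v)
  | [], l₂, v => rfl
  | i :: t, l₂, v => by
      rw [List.cons_append, wact_cons, wact_cons, wact_append A t l₂ v]

lemma wact_reverse (A : Fin n → Fin n → ℤ) (h2 : ∀ i, A i i = 2) :
    ∀ (l : List (Fin n)) (v : Fin n → ℤ), wact A l.reverse (wact A l v) = v
  | [], v => rfl
  | i :: t, v => by
      rw [List.reverse_cons, wact_append, wact_cons, wact_cons, wact_nil,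
        sref_invol A (h2 i), wact_reverse A h2 t v]

/-! quiver reflection combinatorics -/

def opQ (arr : Fin n → Fin n → ℕ) : Fin n → Fin n → ℕ := fun a b => arr b a

lemma cartan_reflQ (arr : Fin n → Fin n → ℕ) (i : Fin n) :
    cartan (reflQ arr i) = cartan arr := by
  funext a b
  by_cases hab : a = b
  · simp [cartan, hab]
  · by_cases hc : a = i ∨ b = i
    · have hc' : b = i ∨ a = i := hc.symm
      simp only [cartan, reflQ, if_neg hab, if_pos hc, if_pos hc']
      ring
    · have hc' : ¬(b = i ∨ a = i) := fun hx => hc hx.symm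
      simp only [cartan, reflQ, if_neg hab, if_neg hc, if_neg hc']

lemma reflQ_comm (C : Fin n → Fin n → ℕ) (i j : Fin n) :
    reflQ (reflQ C i) j = reflQ (reflQ C j) i := by
  funext a b
  simp only [reflQ]
  split_ifs <;> first | rfl | tauto

lemma reflQ_invol (C : Fin n → Fin n → ℕ) (i : Fin n) :
    reflQ (reflQ C i) i = C := by
  funext a b
  simp only [reflQ]
  split_ifs <;> first | rfl | tauto

lemma opQ_reflQ (C : Fin n → Fin n → ℕ) (i : Fin n) :
    opQ (reflQ C i) = reflQ (opQ C) i := by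
  funext a b
  simp only [opQ, reflQ]
  split_ifs <;> first | rfl | tauto

def reflList (C : Fin n → Fin n → ℕ) (l : List (Fin n)) : Fin n → Fin n → ℕ :=
  l.foldl reflQ C

lemma reflList_nil (C : Fin n → Fin n → ℕ) : reflList C [] = C := rfl

lemma reflList_cons (C : Fin n → Fin n → ℕ) (j : Fin n) (t : List (Fin n)) :
    reflList C (j :: t) = reflList (reflQ C j) t := rfl

lemma reflList_reflQ : ∀ (t : List (Fin n)) (C : Fin n → Fin n → ℕ) (j : Fin n),
    reflList (reflQ C j) t = reflQ (reflList C t) j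
  | [], C, j => rfl
  | i :: t, C, j => by
      rw [reflList_cons, reflQ_comm C j i, reflList_reflQ t (reflQ C i) j, reflList_cons]

lemma reflList_reverse (C : Fin n → Fin n → ℕ) :
    ∀ l : List (Fin n), reflList C l.reverse = reflList C l := by
  intro l
  induction l with
  | nil => rfl
  | cons j t ih =>
      rw [List.reverse_cons]
      show List.foldl reflQ C (t.reverse ++ [j]) = _
      rw [List.foldl_append]
      show reflQ (reflList C t.reverse) j = _
      rw [ih, ← reflList_reflQ, reflList_cons]

lemma reflList_reflList : ∀ (l : List (Fin n)) (C : Fin n → Fin n → ℕ),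
    reflList (reflList C l) l = C
  | [], _ => rfl
  | j :: t, C => by
      rw [reflList_cons C, reflList_cons (reflList (reflQ C j) t),
        ← reflList_reflQ t (reflQ C j) j, reflQ_invol, reflList_reflList t C]

lemma opQ_reflList : ∀ (l : List (Fin n)) (C : Fin n → Fin n → ℕ),
    opQ (reflList C l) = reflList (opQ C) l
  | [], _ => rfl
  | j :: t, C => by
      rw [reflList_cons, opQ_reflList t, opQ_reflQ, reflList_cons]

lemma reflList_count : ∀ (l : List (Fin n)) (C : Fin n → Fin n → ℕ) (a b : Fin n),
    reflList C l a b = if Even (l.count a + l.count b) then C a b else C b a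
  | [], C, a, b => by simp [reflList_nil]
  | j :: t, C, a, b => by
      rw [reflList_cons, reflList_count t]
      rcases eq_or_ne a j with ha | ha <;> rcases eq_or_ne b j with hb | hb
      · -- a = j, b = j (so a = b)
        subst ha; subst hb
        simp [reflQ]
      · subst ha
        have hc : (a :: t).count a + (a :: t).count b = (t.count a + t.count b) + 1 := by
          rw [List.count_cons_self, List.count_cons_of_ne hb.symm]
          omega
        rw [hc]
        have h1 : reflQ C a a b = C b a := by
          simp [reflQ]
        have h2 : reflQ C a b a = C a b := by
          simp [reflQ]
        rw [h1, h2]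
        by_cases hev : Even (t.count a + t.count b) <;>
          simp [hev, Nat.even_add_one]
      · subst hb
        have hc : (b :: t).count a + (b :: t).count b = (t.count a + t.count b) + 1 := by
          rw [List.count_cons_self, List.count_cons_of_ne ha.symm]
          omega
        rw [hc]
        have h1 : reflQ C b a b = C b a := by
          simp [reflQ]
        have h2 : reflQ C b b a = C a b := by
          simp [reflQ]
        rw [h1, h2]
        by_cases hev : Even (t.count a + t.count b) <;>
          simp [hev, Nat.even_add_one]
      · have hc : (j :: t).count a + (j :: t).count b = t.count a + t.count b := by
          rw [List.count_cons_of_ne ha.symm, List.count_cons_of_ne hb.symm]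
        rw [hc]
        have h1 : reflQ C j a b = C a b := by
          simp [reflQ, ha, hb]
        have h2 : reflQ C j b a = C b a := by
          simp [reflQ, ha, hb]
        rw [h1, h2]

lemma reflList_full (C : Fin n → Fin n → ℕ) (l : List (Fin n))
    (hnd : l.Nodup) (hmem : ∀ i, i ∈ l) : reflList C l = C := by
  funext a b
  rw [reflList_count]
  rw [List.count_eq_one_of_mem hnd (hmem a), List.count_eq_one_of_mem hnd (hmem b)]
  norm_num

lemma adaptedTo_cons (C : Fin n → Fin n → ℕ) (i : Fin n) (t : List (Fin n)) :
    AdaptedTo C (i :: t) ↔ isSource C i ∧ AdaptedTo (reflQ C i) t := Iff.rfl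

lemma adaptedTo_append : ∀ (xs : List (Fin n)) (C : Fin n → Fin n → ℕ) (ys : List (Fin n)),
    AdaptedTo C (xs ++ ys) ↔ AdaptedTo C xs ∧ AdaptedTo (reflList C xs) ys
  | [], C, ys => by simp [AdaptedTo, reflList_nil]
  | x :: xs, C, ys => by
      rw [List.cons_append, adaptedTo_cons, adaptedTo_cons, reflList_cons,
        adaptedTo_append xs (reflQ C x) ys, and_assoc]

lemma adapted_reverse_op : ∀ (l : List (Fin n)) (C : Fin n → Fin n → ℕ),
    AdaptedTo C l → AdaptedTo (opQ (reflList C l)) l.reverse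
  | [], _, _ => trivial
  | i :: t, C, h => by
      obtain ⟨hs, ha⟩ := h
      rw [List.reverse_cons, adaptedTo_append]
      refine ⟨adapted_reverse_op t (reflQ C i) ha, ?_, trivial⟩
      have e1 : reflList (opQ (reflList C (i :: t))) t.reverse = reflQ (opQ C) i := by
        rw [reflList_reverse, reflList_cons C, opQ_reflList, opQ_reflQ, reflList_reflList]
      rw [e1]
      intro b
      show (if b = i ∨ i = i then opQ C i b else opQ C b i) = 0
      rw [if_pos (Or.inr rfl)]
      exact hs b

lemma adapted_map (st : Fin n → Fin n) (hst : ∀ i, st (st i) = i) :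
    ∀ (l : List (Fin n)) (C : Fin n → Fin n → ℕ), AdaptedTo C l →
      AdaptedTo (fun a b => C (st a) (st b)) (l.map st)
  | [], _, _ => trivial
  | i :: t, C, h => by
      obtain ⟨hs, ha⟩ := h
      refine ⟨?_, ?_⟩
      · intro j
        show C (st j) (st (st i)) = 0
        rw [hst]
        exact hs (st j)
      · have hrec := adapted_map st hst t (reflQ C i) ha
        have he : reflQ (fun a b => C (st a) (st b)) (st i)
            = fun a b => reflQ C i (st a) (st b) := by
          funext a b
          simp only [reflQ]
          have h1 : (a = st i ∨ b = st i) ↔ (st a = i ∨ st b = i) := by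
            constructor
            · rintro (rfl | rfl)
              · exact Or.inl (hst i)
              · exact Or.inr (hst i)
            · rintro (hx | hx)
              · exact Or.inl (by rw [← hx, hst])
              · exact Or.inr (by rw [← hx, hst])
          by_cases hc : a = st i ∨ b = st i
          · rw [if_pos hc, if_pos (h1.mp hc)]
          · rw [if_neg hc, if_neg (fun hx => hc (h1.mpr hx))]
        rw [he]
        exact hrec

lemma source_front : ∀ (p : List (Fin n)) (arr : Fin n → Fin n → ℕ) (i : Fin n)
    (q : List (Fin n)), isSource arr i → i ∉ p → AdaptedTo arr (p ++ i :: q) →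
    AdaptedTo arr (i :: (p ++ q)) ∧
      wact (cartan arr) (p ++ i :: q) = wact (cartan arr) (i :: (p ++ q))
  | [], arr, i, q, _, _, h => ⟨h, rfl⟩
  | j :: p', arr, i, q, hs, hip, h => by
      obtain ⟨hsj, ha⟩ := h
      have hij : i ≠ j := fun e => hip (e ▸ (List.mem_cons_self (a := j) (l := p')))
      have hip' : i ∉ p' := fun e => hip (List.mem_cons_of_mem j e)
      have haij : arr i j = 0 := hsj i
      have haji : arr j i = 0 := hs j
      have hsi' : isSource (reflQ arr j) i := by
        intro b
        show (if b = j ∨ i = j then arr i b else arr b i) = 0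
        by_cases hb : b = j ∨ i = j
        · rw [if_pos hb]
          rcases hb with rfl | hb2
          · exact haij
          · exact absurd hb2 hij
        · rw [if_neg hb]
          exact hs b
      obtain ⟨hA', hW'⟩ := source_front p' (reflQ arr j) i q hsi' hip' ha
      obtain ⟨_, hA''⟩ := hA'
      have hsj' : isSource (reflQ arr i) j := by
        intro b
        show (if b = i ∨ j = i then arr j b else arr b j) = 0
        by_cases hb : b = i ∨ j = i
        · rw [if_pos hb]
          rcases hb with rfl | hb2
          · exact haji
          · exact absurd hb2 (Ne.symm hij)
        · rw [if_neg hb]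
          exact hsj b
      have hcij : cartan arr i j = 0 := by simp [cartan, hij, haij, haji]
      have hcji : cartan arr j i = 0 := by simp [cartan, Ne.symm hij, haij, haji]
      constructor
      · exact ⟨hs, hsj', by rw [reflQ_comm]; exact hA''⟩
      · funext v
        rw [cartan_reflQ arr j] at hW'
        show sref (cartan arr) j (wact (cartan arr) (p' ++ i :: q) v) = _
        rw [hW']
        show sref (cartan arr) j (sref (cartan arr) i (wact (cartan arr) (p' ++ q) v))
          = sref (cartan arr) i (sref (cartan arr) j (wact (cartan arr) (p' ++ q) v))
        exact sref_comm (cartan arr) hcji hcij _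

lemma wact_adapted_eq : ∀ (l : List (Fin n)) (arr : Fin n → Fin n → ℕ)
    (l' : List (Fin n)), l.Perm l' → l.Nodup → AdaptedTo arr l → AdaptedTo arr l' →
    wact (cartan arr) l = wact (cartan arr) l'
  | [], arr, l', hp, _, _, _ => by rw [List.Perm.eq_nil hp.symm]
  | i :: t, arr, l', hp, hnd, hA, hA' => by
      obtain ⟨hs, hat⟩ := hA
      have hil' : i ∈ l' := hp.mem_iff.mp (List.mem_cons_self (a := i) (l := t))
      obtain ⟨p, q, rfl⟩ := List.append_of_mem hil'
      have hnd' : (p ++ i :: q).Nodup := hp.nodup_iff.mp hnd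
      have hipp : i ∉ p := by
        have hd := List.disjoint_of_nodup_append hnd'
        exact fun hx => hd hx (List.mem_cons_self (a := i) (l := q))
      obtain ⟨hA2, hW2⟩ := source_front p arr i q hs hipp hA'
      obtain ⟨_, hA2'⟩ := hA2
      have hperm2 : t.Perm (p ++ q) := by
        have h1 : (i :: t).Perm (i :: (p ++ q)) := hp.trans List.perm_middle
        exact (List.perm_cons i).mp h1
      have hrec := wact_adapted_eq t (reflQ arr i) (p ++ q) hperm2
        (List.Nodup.of_cons hnd) hat hA2'
      rw [cartan_reflQ] at hrec
      funext v
      rw [hW2]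
      show sref (cartan arr) i (wact (cartan arr) t v)
        = sref (cartan arr) i (wact (cartan arr) (p ++ q) v)
      rw [hrec]

/-! the longest element -/

lemma w0_formula {hh : ℕ} (S : Setup n hh) (v : Fin n → ℤ) (k : Fin n) :
    S.w0 v k = -(v (S.star k)) := by
  have hv : v = ∑ i, Pi.single i (v i) := (Finset.univ_sum_single v).symm
  have h1 : ∀ i : Fin n, wact (cartan S.arr) S.lw0 (Pi.single i (v i))
      = -(Pi.single (S.star i) (v i)) := by
    intro i
    have h2 : (Pi.single i (v i) : Fin n → ℤ) = (v i) • (Pi.single i 1 : Fin n → ℤ) := by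
      rw [← Pi.single_smul, smul_eq_mul, mul_one]
    rw [h2, wact_smul, S.hw0, smul_neg, ← Pi.single_smul, smul_eq_mul, mul_one]
  have hw : S.w0 v = ∑ i, wact (cartan S.arr) S.lw0 (Pi.single i (v i)) := by
    show wact (cartan S.arr) S.lw0 v = _
    conv_lhs => rw [hv]
    exact wact_sum _ _ _ _
  rw [hw, Finset.sum_apply]
  have h3 : ∀ i : Fin n, wact (cartan S.arr) S.lw0 (Pi.single i (v i)) k
      = if i = S.star k then -(v i) else 0 := by
    intro i
    rw [h1 i]
    show -((Pi.single (S.star i) (v i) : Fin n → ℤ) k) = _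
    rw [Pi.single_apply]
    by_cases hik : i = S.star k
    · have hk : k = S.star i := by rw [hik, S.hstar]
      simp [hk, S.hstar]
    · have hk : ¬(k = S.star i) := fun e => hik (by rw [e, S.hstar])
      simp [hk, hik]
  rw [Finset.sum_congr rfl fun i _ => h3 i, Finset.sum_ite_eq']
  simp

lemma w0_w0 {hh : ℕ} (S : Setup n hh) (v : Fin n → ℤ) : S.w0 (S.w0 v) = v := by
  funext k
  rw [w0_formula, w0_formula, S.hstar, neg_neg]

lemma w0_sref {hh : ℕ} (S : Setup n hh) (B : Fin n → Fin n → ℤ)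
    (hB : ∀ p q, B p q = cartan S.arr (S.star p) (S.star q))
    (i : Fin n) (v : Fin n → ℤ) :
    S.w0 (sref (cartan S.arr) i (S.w0 v)) = sref B (S.star i) v := by
  have hst : Function.Involutive S.star := S.hstar
  have hsum : (∑ j, cartan S.arr i j * (S.w0 v) j) = -(∑ j, B (S.star i) j * v j) := by
    rw [← Finset.sum_neg_distrib]
    refine Fintype.sum_equiv hst.toPerm _ _ (fun x => ?_)
    show cartan S.arr i x * S.w0 v x = -(B (S.star i) (S.star x) * v (S.star x))
    rw [w0_formula, hB, S.hstar, S.hstar]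
    ring
  funext k
  rw [w0_formula, sref_apply, hsum, w0_formula, S.hstar, sref_apply]
  by_cases hc : S.star k = i
  · have hc2 : k = S.star i := by rw [← hc, S.hstar]
    rw [if_pos hc, if_pos hc2]
    ring
  · have hc2 : ¬(k = S.star i) := fun e => hc (by rw [e, S.hstar])
    rw [if_neg hc, if_neg hc2]
    ring

lemma w0_wact {hh : ℕ} (S : Setup n hh) (B : Fin n → Fin n → ℤ)
    (hB : ∀ p q, B p q = cartan S.arr (S.star p) (S.star q)) :
    ∀ (l : List (Fin n)) (v : Fin n → ℤ),
      S.w0 (wact (cartan S.arr) l (S.w0 v)) = wact B (l.map S.star) v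
  | [], v => w0_w0 S v
  | i :: t, v => by
      rw [wact_cons]
      have e : wact (cartan S.arr) t (S.w0 v)
          = S.w0 (S.w0 (wact (cartan S.arr) t (S.w0 v))) := (w0_w0 S _).symm
      rw [e, w0_sref S B hB, w0_wact S B hB t v]
      rfl

end CoxeterDualityAux

/-- For any simply-laced Dynkin quiver `Q` with dual quiver `Q*`
(`T` being the data attached to `Q*`, i.e. `T.arr = dualArr` and
`ξ*(i) = -ξ(i*)`), the Coxeter transforms satisfy `w₀ τ_Q w₀ = τ_{Q*}^{-1}`,
i.e. `w₀ ∘ τ_Q ∘ w₀ ∘ τ_{Q*} = id`. -/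
theorem coxeter_duality {n h : ℕ} (S T : Setup n h)
    (hTarr : T.arr = dualArr S.star S.arr)
    (hTxi : ∀ i, T.xi i = - S.xi (S.star i)) :
    ∀ v : Fin n → ℤ, S.w0 (S.tau (S.w0 (T.tau v))) = v := by
  intro v
  have hstinv : Function.Involutive S.star := S.hstar
  have hB : ∀ p q, cartan T.arr p q = cartan S.arr (S.star p) (S.star q) := by
    intro p q
    rw [hTarr]
    by_cases hpq : p = q
    · simp [cartan, dualArr, hpq]
    · have hpq' : ¬(S.star p = S.star q) := fun e => hpq (by rw [← S.hstar p, e, S.hstar])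
      simp only [cartan, dualArr, if_neg hpq, if_neg hpq']
      ring
  have key : S.w0 (S.tau (S.w0 (T.tau v)))
      = wact (cartan T.arr) (List.map S.star S.ord) (T.tau v) :=
    w0_wact S (cartan T.arr) hB S.ord (T.tau v)
  rw [key]
  have hX : AdaptedTo T.arr ((S.ord.map S.star).reverse) := by
    have h1 : AdaptedTo (opQ (reflList S.arr S.ord)) S.ord.reverse :=
      adapted_reverse_op S.ord S.arr S.hord_adapted
    rw [reflList_full S.arr S.ord S.hord_nodup S.hord_mem] at h1
    have h2 := adapted_map S.star S.hstar S.ord.reverse (opQ S.arr) h1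
    have h3 : (fun a b => opQ S.arr (S.star a) (S.star b)) = T.arr := by
      rw [hTarr]
      rfl
    rw [h3, List.map_reverse] at h2
    exact h2
  have hXnodup : ((S.ord.map S.star).reverse).Nodup := by
    rw [List.nodup_reverse]
    exact S.hord_nodup.map hstinv.injective
  have hperm : T.ord.Perm ((S.ord.map S.star).reverse) := by
    rw [List.perm_iff_count]
    intro a
    have hmem : a ∈ (S.ord.map S.star).reverse := by
      rw [List.mem_reverse, List.mem_map]
      exact ⟨S.star a, S.hord_mem _, S.hstar a⟩
    rw [List.count_eq_one_of_mem T.hord_nodup (T.hord_mem a),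
      List.count_eq_one_of_mem hXnodup hmem]
  have hw := wact_adapted_eq T.ord T.arr ((S.ord.map S.star).reverse) hperm
    T.hord_nodup T.hord_adapted hX
  show wact (cartan T.arr) (S.ord.map S.star) (wact (cartan T.arr) T.ord v) = v
  rw [hw]
  have hfin := wact_reverse (cartan T.arr) (fun i => by simp [cartan])
    ((S.ord.map S.star).reverse) v
  rw [List.reverse_reverse] at hfin
  exact hfin


end

end CLDual
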